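/- Let p be a real number with 0 ≤ p ≤ 1 and let d ≥ 2 be a natural number. Then the supremum (in ℝ, with the convention that the supremum of the empty set is 0) of the set {ε : ℝ | 0 ≤ ε ≤ 1 ∧ Q(p, ε, d) = 0} equals (3/4)·(1 − p). Consequently the probability p of the causal relation A→B is determined by the family of capacities ε ↦ Q(p, ε, d). -/

import Mathlib

/-- The greatest natural number `m` with `1 ≤ m`, `(m : ℝ) ≤ √(1/(1 - ε/(1 - p)))`,
and `m ≤ d` (as a supremum in `ℕ`). -/
noncomputable def M (p ε : ℝ) (d : ℕ) : ℕ :=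
  sSup {m : ℕ | 1 ≤ m ∧ (m : ℝ) ≤ Real.sqrt (1 / (1 - ε / (1 - p))) ∧ m ≤ d}

/-- The one-shot entanglement transmission capacity of a harmonic clean model. -/
noncomputable def Q (p ε : ℝ) (d : ℕ) : ℝ :=
  if p < 1 - ε then Real.log (M p ε d) else Real.log d

theorem Real.log_natCast_eq_zero_iff {n : ℕ} : Real.log n = 0 ↔ n ≤ 1 := by
  rw [Real.log_eq_zero]
  constructor
  · rintro (h | h | h)
    · exact_mod_cast h.trans_le zero_le_one
    · exact_mod_cast h.le
    · linarith [n.cast_nonneg (α := ℝ)]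
  · intro h
    interval_cases n <;> simp

theorem Real.sSup_Ico_of_nonneg {b : ℝ} (hb : 0 ≤ b) : sSup (Set.Ico 0 b) = b := by
  rcases hb.eq_or_lt with rfl | hb
  · rw [Set.Ico_self, Real.sSup_empty]
  · exact csSup_Ico hb

theorem sqrt_one_div_one_sub_lt_two_iff {t : ℝ} (ht : t < 1) :
    √(1 / (1 - t)) < 2 ↔ t < 3 / 4 := by
  rw [Real.sqrt_lt' two_pos, div_lt_iff₀ (sub_pos.2 ht)]
  constructor <;> intro h <;> linarith

-- If the minimum is `0`, the defining set is empty and the junk value `sSup ∅ = 0` still matches.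
theorem M_eq_min_floor (p ε : ℝ) (d : ℕ) :
    M p ε d = min ⌊√(1 / (1 - ε / (1 - p)))⌋₊ d := by
  set s := √(1 / (1 - ε / (1 - p)))
  have hset : {m : ℕ | 1 ≤ m ∧ (m : ℝ) ≤ s ∧ m ≤ d} = Set.Icc 1 (min ⌊s⌋₊ d) := by
    ext m
    rw [Set.mem_ofPred_eq, Set.mem_Icc, le_min_iff, Nat.le_floor_iff (Real.sqrt_nonneg _)]
  rw [M, hset]
  rcases Nat.eq_zero_or_pos (min ⌊s⌋₊ d) with h | h
  · rw [h, Set.Icc_eq_empty (by omega), Nat.sSup_def ⟨0, by simp⟩]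
    simp
  · exact csSup_Icc h

theorem M_le_one_iff {p ε : ℝ} {d : ℕ} (hd : 2 ≤ d) :
    M p ε d ≤ 1 ↔ √(1 / (1 - ε / (1 - p))) < 2 := by
  rw [M_eq_min_floor, min_le_iff, ← Nat.lt_succ_iff, Nat.floor_lt (Real.sqrt_nonneg _)]
  norm_num
  omega

theorem Q_eq_zero_iff {p ε : ℝ} {d : ℕ} (hd : 2 ≤ d) (hε : 0 ≤ ε) :
    Q p ε d = 0 ↔ ε < 3 / 4 * (1 - p) := by
  unfold Q
  split_ifs with hpε
  · have hp : 0 < 1 - p := by linarith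
    rw [Real.log_natCast_eq_zero_iff, M_le_one_iff hd,
      sqrt_one_div_one_sub_lt_two_iff ((div_lt_one hp).2 (by linarith)), div_lt_iff₀ hp]
  · rw [Real.log_natCast_eq_zero_iff]
    constructor <;> intro h
    · omega
    · linarith

theorem stmt_9 (p : ℝ) (hp0 : 0 ≤ p) (hp1 : p ≤ 1) (d : ℕ) (hd : 2 ≤ d) :
    sSup {ε : ℝ | 0 ≤ ε ∧ ε ≤ 1 ∧ Q p ε d = 0} = (3 / 4) * (1 - p) := by
  have hset : {ε : ℝ | 0 ≤ ε ∧ ε ≤ 1 ∧ Q p ε d = 0} = Set.Ico 0 ((3 / 4) * (1 - p)) := by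
    ext ε
    rw [Set.mem_ofPred_eq, Set.mem_Ico]
    constructor
    · rintro ⟨hε, -, hQ⟩
      exact ⟨hε, (Q_eq_zero_iff hd hε).1 hQ⟩
    · rintro ⟨hε, hlt⟩
      exact ⟨hε, by linarith, (Q_eq_zero_iff hd hε).2 hlt⟩
  rw [hset, Real.sSup_Ico_of_nonneg (by linarith)]
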